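/- For all n, k ≥ 0, the number of 0-1 matrices of size n × k that contain neither (1 1 / 1 0) nor (1 1 / 1 1) as a 2×2 submatrix (i.e., Γ-free matrices) equals ∑_{m=0}^{min(n,k)} m! · S(n+1, m+1) · m! · S(k+1, m+1). -/

import Mathlib

/-!
Let `G(n, k)` be the number of Γ-free `n × k` matrices. If the ones of the first row lie in the
columns `S ≠ ∅`, the remaining rows form a Γ-free matrix that must vanish exactly in the
non-maximal columns of `S`; deleting those columns leaves an arbitrary Γ-free matrix with
`k - #S + 1` columns. Summing over `S` gives `G(n+1, k) = G(n, k) + ∑_{j<k} C(k, j) G(n, j+1)`,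
and the closed form satisfies the same recurrence because of the Stirling identity
`∑_{j<k} C(k, j) S(j+2, m+1) = (m+1)² S(k+1, m+2) + m S(k+1, m+1)`.
-/

open Finset

attribute [local instance] Classical.propDecidable

/-- A 0-1 matrix (with Boolean entries) is Γ-free if there are no rows `i1 < i2` and
columns `j1 < j2` with ones in positions `(i1,j1)`, `(i1,j2)`, `(i2,j1)`; this forbids
both `(1 1 / 1 0)` and `(1 1 / 1 1)` as 2×2 submatrices. -/
def IsGammaFree {n k : ℕ} (M : Fin n → Fin k → Bool) : Prop :=
  ∀ i1 i2 : Fin n, ∀ j1 j2 : Fin k, i1 < i2 → j1 < j2 →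
    ¬(M i1 j1 = true ∧ M i1 j2 = true ∧ M i2 j1 = true)

/-- The Stirling numbers of the second kind. -/
def stirling : ℕ → ℕ → ℕ
  | 0, 0 => 1
  | 0, _ + 1 => 0
  | _ + 1, 0 => 0
  | n + 1, k + 1 => stirling n k + (k + 1) * stirling n (k + 1)

open Nat

theorem stirling_eq_stirlingSecond : stirling = stirlingSecond := by
  funext n m
  induction n generalizing m with
  | zero => cases m <;> rfl
  | succ n ih =>
    cases m with
    | zero => rfl
    | succ m => rw [stirling, stirlingSecond_succ_succ, ih, ih, add_comm]

theorem Finset.sum_range_succ_choose_mul {R : Type*} [NonAssocSemiring R] (f : ℕ → R) (k : ℕ) :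
    ∑ j ∈ range (k + 1), ((k + 1).choose j : R) * f j =
      ∑ j ∈ range (k + 1), (k.choose j : R) * f j +
        ∑ j ∈ range k, (k.choose j : R) * f (j + 1) := by
  rw [sum_range_succ', sum_range_succ' (fun j => (k.choose j : R) * f j)]
  simp only [choose_succ_succ, cast_add, add_mul, sum_add_distrib, choose_zero_right]
  abel

theorem sum_range_choose_mul_stirlingSecond_succ (k m : ℕ) :
    ∑ j ∈ range (k + 1), (k + 1).choose j * stirlingSecond (j + 2) (m + 1) =
      (m + 2) * ∑ j ∈ range k, k.choose j * stirlingSecond (j + 2) (m + 1) +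
        ∑ j ∈ range k, k.choose j * stirlingSecond (j + 2) m + stirlingSecond (k + 2) (m + 1) := by
  have hpascal := sum_range_succ_choose_mul (R := ℕ) (fun j => stirlingSecond (j + 2) (m + 1)) k
  push_cast at hpascal
  rw [hpascal, sum_range_succ, choose_self, one_mul]
  simp only [stirlingSecond_succ_succ, mul_add, sum_add_distrib, mul_left_comm _ (m + 1 : ℕ),
    ← mul_sum]
  ring

theorem sum_range_choose_mul_stirlingSecond (k m : ℕ) :
    ∑ j ∈ range k, k.choose j * stirlingSecond (j + 2) (m + 1) =
      (m + 1) ^ 2 * stirlingSecond (k + 1) (m + 2) + m * stirlingSecond (k + 1) (m + 1) := by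
  induction k generalizing m with
  | zero => rcases m with _ | m <;> simp [stirlingSecond_eq_zero_of_lt]
  | succ k ih =>
    rw [sum_range_choose_mul_stirlingSecond_succ, ih]
    rcases m with _ | m
    · simp [stirlingSecond_succ_succ (k + 1) 1, stirlingSecond_one_right]
    · rw [ih, stirlingSecond_succ_succ (k + 1) (m + 2), stirlingSecond_succ_succ (k + 1) (m + 1)]
      ring_nf

/-- The poly-Bernoulli number `B_n^{(-k)}`, through Kaneko's closed formula. -/
def polyBernoulli (n k : ℕ) : ℕ :=
  ∑ m ∈ range (n + 1), m ! ^ 2 * stirlingSecond (n + 1) (m + 1) * stirlingSecond (k + 1) (m + 1)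

theorem polyBernoulli_zero_left (k : ℕ) : polyBernoulli 0 k = 1 := by
  simp [polyBernoulli, stirlingSecond_one_right]

theorem polyBernoulli_succ_left (n k : ℕ) :
    polyBernoulli (n + 1) k =
      polyBernoulli n k + ∑ j ∈ range k, k.choose j * polyBernoulli n (j + 1) := by
  set a : ℕ → ℕ := fun m => m ! ^ 2 * stirlingSecond (n + 1) (m + 1)
  have hL : polyBernoulli (n + 1) k = ∑ m ∈ range (n + 1), a m *
      ((m + 1) * stirlingSecond (k + 1) (m + 1) +
        (m + 1) ^ 2 * stirlingSecond (k + 1) (m + 2)) := by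
    have hsplit : ∀ m, m ! ^ 2 * stirlingSecond (n + 2) (m + 1) * stirlingSecond (k + 1) (m + 1) =
        (m + 1) * a m * stirlingSecond (k + 1) (m + 1) +
          m ! ^ 2 * stirlingSecond (n + 1) m * stirlingSecond (k + 1) (m + 1) := fun m => by
      rw [stirlingSecond_succ_succ]; ring
    rw [polyBernoulli, sum_congr rfl fun m _ => hsplit m, sum_add_distrib,
      sum_range_succ (fun m => (m + 1) * a m * stirlingSecond (k + 1) (m + 1)),
      sum_range_succ'
        (fun m => m ! ^ 2 * stirlingSecond (n + 1) m * stirlingSecond (k + 1) (m + 1))]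
    simp only [a, stirlingSecond_eq_zero_of_lt (lt_add_one (n + 1)), stirlingSecond_succ_zero,
      mul_zero, zero_mul, add_zero, factorial_succ, ← sum_add_distrib]
    refine sum_congr rfl fun m _ => ?_
    ring
  have hR : ∑ j ∈ range k, k.choose j * polyBernoulli n (j + 1) = ∑ m ∈ range (n + 1),
      a m * ((m + 1) ^ 2 * stirlingSecond (k + 1) (m + 2) +
        m * stirlingSecond (k + 1) (m + 1)) := by
    simp only [polyBernoulli, mul_sum]
    rw [sum_comm]
    refine sum_congr rfl fun m _ => ?_
    rw [← sum_range_choose_mul_stirlingSecond, mul_sum]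
    refine sum_congr rfl fun j _ => ?_
    ring
  rw [hL, hR, polyBernoulli, ← sum_add_distrib]
  refine sum_congr rfl fun m _ => ?_
  ring

theorem polyBernoulli_eq_sum_range_min (n k : ℕ) :
    polyBernoulli n k = ∑ m ∈ range (min n k + 1),
      m ! ^ 2 * stirlingSecond (n + 1) (m + 1) * stirlingSecond (k + 1) (m + 1) := by
  refine (sum_subset (range_subset_range.mpr (by omega)) fun m hm hmk => ?_).symm
  simp only [mem_range] at hm hmk
  rw [stirlingSecond_eq_zero_of_lt (by omega : k + 1 < m + 1), mul_zero]

theorem isGammaFree_cons_iff {n k : ℕ} (r : Fin k → Bool) (N : Fin n → Fin k → Bool) :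
    IsGammaFree (Fin.cons r N : Fin (n + 1) → Fin k → Bool) ↔
      IsGammaFree N ∧ ∀ i j1 j2, j1 < j2 → r j1 = true → r j2 = true → N i j1 = false := by
  constructor
  · intro hM
    refine ⟨fun i1 i2 j1 j2 hi hj => by simpa using hM i1.succ i2.succ j1 j2 (by simpa) hj, ?_⟩
    intro i j1 j2 hj h1 h2
    simpa [h1, h2] using hM 0 i.succ j1 j2 i.succ_pos hj
  · rintro ⟨hN, hr⟩ i1 i2 j1 j2 hi hj
    induction i2 using Fin.cases with
    | zero => exact absurd hi (Fin.not_lt_zero i1)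
    | succ i2 =>
      induction i1 using Fin.cases with
      | zero => simpa using hr i2 j1 j2 hj
      | succ i1 => simpa using hN i1 i2 j1 j2 (by simpa using hi) hj

theorem isGammaFree_comp_orderEmbedding_iff {n k l : ℕ} (M : Fin n → Fin k → Bool)
    (f : Fin l ↪o Fin k) (hM : ∀ i j, j ∉ Set.range f → M i j = false) :
    IsGammaFree (fun i a => M i (f a)) ↔ IsGammaFree M := by
  refine ⟨fun h i1 i2 j1 j2 hi hj ⟨h1, h2, h3⟩ => ?_,
    fun h i1 i2 a1 a2 hi ha => h i1 i2 _ _ hi (by simpa)⟩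
  obtain ⟨a1, rfl⟩ : j1 ∈ Set.range f := by_contra fun hj => by simp [hM i1 j1 hj] at h1
  obtain ⟨a2, rfl⟩ : j2 ∈ Set.range f := by_contra fun hj => by simp [hM i1 _ hj] at h2
  exact h i1 i2 a1 a2 hi (by simpa using hj) ⟨h1, h2, h3⟩

theorem Finset.card_filter_exists_lt {α : Type*} [LinearOrder α] (S : Finset α) :
    #{j ∈ S | ∃ j' ∈ S, j < j'} = #S - 1 := by
  rcases S.eq_empty_or_nonempty with rfl | hS
  · simp
  rw [← card_erase_of_mem (S.max'_mem hS)]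
  congr 1
  ext j
  simp only [mem_filter, mem_erase]
  constructor
  · rintro ⟨hj, j', hj', hlt⟩
    exact ⟨(hlt.trans_le (S.le_max' j' hj')).ne, hj⟩
  · rintro ⟨hne, hj⟩
    exact ⟨hj, S.max' hS, S.max'_mem hS, lt_of_le_of_ne (S.le_max' j hj) hne⟩

noncomputable def gammaFreeCount (n k : ℕ) : ℕ :=
  #{M : Fin n → Fin k → Bool | IsGammaFree M}

theorem card_gammaFree_vanishing_on (n : ℕ) {k : ℕ} (T : Finset (Fin k)) :
    #{N : Fin n → Fin k → Bool | IsGammaFree N ∧ ∀ i, ∀ j ∈ T, N i j = false} =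
      gammaFreeCount n (k - #T) := by
  have hcard : #Tᶜ = k - #T := by rw [card_compl, Fintype.card_fin]
  set e := Tᶜ.orderIsoOfFin hcard
  set f := Tᶜ.orderEmbOfFin hcard
  have hrange : ∀ j, j ∉ Set.range f → j ∈ T := by simp [f, range_orderEmbOfFin]
  set extend : (Fin n → Fin (k - #T) → Bool) → Fin n → Fin k → Bool :=
    fun N' i j => if h : j ∈ Tᶜ then N' i (e.symm ⟨j, h⟩) else false
  have extend_vanishing : ∀ N' i, ∀ j ∈ T, extend N' i j = false := fun N' i j hj => by
    simp [extend, hj]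
  have extend_comp : ∀ N', (fun i a => extend N' i (f a)) = N' := fun N' => by
    funext i a
    rw [show extend N' i (f a) = _ from dif_pos (Tᶜ.orderEmbOfFin_mem hcard a)]
    exact congrArg (N' i) (e.symm_apply_apply a)
  unfold gammaFreeCount
  refine card_nbij' (fun N i a => N i (f a)) extend ?_ ?_ ?_ ?_
  · intro N hN
    simp only [mem_coe, mem_filter, mem_univ, true_and] at hN ⊢
    exact (isGammaFree_comp_orderEmbedding_iff N f fun i j hj => hN.2 i j (hrange j hj)).mpr hN.1
  · intro N' hN'
    simp only [mem_coe, mem_filter, mem_univ, true_and] at hN' ⊢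
    refine ⟨?_, extend_vanishing N'⟩
    have := isGammaFree_comp_orderEmbedding_iff _ f fun i j hj =>
      extend_vanishing N' i j (hrange j hj)
    rwa [← this, extend_comp]
  · intro N hN
    simp only [mem_coe, mem_filter, mem_univ, true_and] at hN
    funext i j
    by_cases hj : j ∈ Tᶜ
    · simp only [extend, dif_pos hj]
      exact congrArg (N i) (congrArg Subtype.val (e.apply_symm_apply ⟨j, hj⟩))
    · simp only [extend, dif_neg hj]
      exact (hN.2 i j (by simpa using hj)).symm
  · intro N' _
    exact extend_comp N'

/-- For `S = ∅` the truncated `#S - 1` is `0`: a zero first row constrains nothing. -/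
theorem card_gammaFree_firstRow_eq (n : ℕ) {k : ℕ} (S : Finset (Fin k)) :
    #{M : Fin (n + 1) → Fin k → Bool |
        IsGammaFree M ∧ ({j | M 0 j = true} : Finset (Fin k)) = S} =
      gammaFreeCount n (k - (#S - 1)) := by
  rw [← card_filter_exists_lt S, ← card_gammaFree_vanishing_on]
  set r : Fin k → Bool := fun j => decide (j ∈ S)
  have hrow : ∀ M : Fin (n + 1) → Fin k → Bool,
      ({j | M 0 j = true} : Finset (Fin k)) = S ↔ M 0 = r := fun M => by
    simp only [Finset.ext_iff, funext_iff, mem_filter, mem_univ, true_and, r]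
    exact forall_congr' fun j => by cases M 0 j <;> simp
  have hcons : ∀ N, IsGammaFree (Fin.cons r N : Fin (n + 1) → Fin k → Bool) ↔
      IsGammaFree N ∧ ∀ i j, (j ∈ S ∧ ∃ j' ∈ S, j < j') → N i j = false := fun N => by
    rw [isGammaFree_cons_iff]
    simp only [r, decide_eq_true_eq]
    exact and_congr_right' <| forall_congr' fun i =>
      ⟨fun h j ⟨hj, j', hj', hlt⟩ => h j j' hlt hj hj',
        fun h j1 j2 hlt h1 h2 => h j1 ⟨h1, j2, h2, hlt⟩⟩
  refine card_nbij' Fin.tail (fun N => Fin.cons r N) ?_ ?_ ?_ ?_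
  · intro M hM
    simp only [mem_coe, mem_filter, mem_univ, true_and] at hM ⊢
    rw [← hcons, ← (hrow M).mp hM.2, Fin.cons_self_tail]
    exact hM.1
  · intro N hN
    simp only [mem_coe, mem_filter, mem_univ, true_and] at hN ⊢
    exact ⟨(hcons N).mpr hN, (hrow _).mpr (Fin.cons_zero _ _)⟩
  · intro M hM
    simp only [mem_coe, mem_filter, mem_univ, true_and] at hM
    show Fin.cons r (Fin.tail M) = M
    rw [← (hrow M).mp hM.2, Fin.cons_self_tail]
  · intro N _
    exact Fin.tail_cons _ _

theorem gammaFreeCount_zero_left (k : ℕ) : gammaFreeCount 0 k = 1 := by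
  rw [gammaFreeCount, filter_true_of_mem fun M _ i1 => i1.elim0, Finset.card_univ,
    Fintype.card_unique]

theorem gammaFreeCount_succ_left (n k : ℕ) :
    gammaFreeCount (n + 1) k =
      gammaFreeCount n k + ∑ j ∈ range k, k.choose j * gammaFreeCount n (j + 1) := by
  have hfib : gammaFreeCount (n + 1) k =
      ∑ S : Finset (Fin k), gammaFreeCount n (k - (#S - 1)) := by
    rw [gammaFreeCount, card_eq_sum_card_fiberwise (t := univ)
      (f := fun M : Fin (n + 1) → Fin k → Bool => ({j | M 0 j = true} : Finset (Fin k)))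
      fun _ _ => mem_univ _]
    simp only [filter_filter, card_gammaFree_firstRow_eq]
  rw [hfib, ← powerset_univ, sum_powerset_apply_card fun s => gammaFreeCount n (k - (s - 1)),
    Finset.card_univ, Fintype.card_fin, sum_range_succ', ← sum_range_reflect]
  simp only [smul_eq_mul, choose_zero_right, one_mul, zero_tsub, tsub_zero]
  rw [add_comm]
  congr 1
  refine sum_congr rfl fun j hj => ?_
  have hj : j < k := mem_range.mp hj
  rw [show k - 1 - j + 1 = k - j by omega, choose_symm hj.le, show k - (k - j - 1) = j + 1 by omega]

theorem gammaFreeCount_eq_polyBernoulli (n k : ℕ) : gammaFreeCount n k = polyBernoulli n k := by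
  induction n generalizing k with
  | zero => rw [gammaFreeCount_zero_left, polyBernoulli_zero_left]
  | succ n ih => simp only [gammaFreeCount_succ_left, polyBernoulli_succ_left, ih]

theorem card_gammaFree_eq (n k : ℕ) :
    (Finset.univ.filter (fun M : Fin n → Fin k → Bool => IsGammaFree M)).card
      = ∑ m ∈ Finset.range (min n k + 1),
          m.factorial * stirling (n + 1) (m + 1) * m.factorial * stirling (k + 1) (m + 1) := by
  calc _ = polyBernoulli n k := gammaFreeCount_eq_polyBernoulli n k
    _ = _ := by
      rw [polyBernoulli_eq_sum_range_min, stirling_eq_stirlingSecond]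
      exact sum_congr rfl fun m _ => by ring
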